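/- If p < q are consecutive terms of the Farey sequence F_n (a Farey pair in F_n), then ?(q) − ?(p) = 2^{−n}, where ? is Minkowski's question mark function. -/

import Mathlib

/-!
The question mark function satisfies `?(x/(1+x)) = ?(x)/2` and `?(1/(2-x)) = (1+?(x))/2` on
`[0,1]`; both follow from the continued-fraction recursion `?(x) = 2^{-a₁}(2 - ?([0; a₂, a₃, …]))`
together with the symmetry `?(1-x) = 1 - ?(x)`. By induction on `n`, every Farey pair `p < q` in
`F_n` is the image of `0 < 1` under a Möbius map `g ∈ SL(2,ℤ)` with `?(g x) = ?(p) + 2^{-n} ?(x)` on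
`[0,1]`: the two pairs that replace it in `F_{n+1}` come from `g ∘ (x ↦ x/(1+x))` and
`g ∘ (x ↦ 1/(2-x))`. Evaluating at `x = 1` gives `?(q) - ?(p) = 2^{-n}`.
-/

open scoped MatrixGroups OnePoint
open Matrix MeasureTheory Filter Topology

noncomputable section

namespace Farey

/-- Möbius action of a real 2×2 matrix on `ℝ ∪ {∞}`. -/
def mobAux (M : Matrix (Fin 2) (Fin 2) ℝ) : OnePoint ℝ → OnePoint ℝ :=
  OnePoint.rec (if M 1 0 = 0 then ∞ else ((M 0 0 / M 1 0 : ℝ) : OnePoint ℝ))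
    (fun r => if M 1 0 * r + M 1 1 = 0 then ∞
      else (((M 0 0 * r + M 0 1) / (M 1 0 * r + M 1 1) : ℝ) : OnePoint ℝ))

@[simp] lemma mobAux_infty (M : Matrix (Fin 2) (Fin 2) ℝ) :
    mobAux M ∞ = if M 1 0 = 0 then ∞ else ((M 0 0 / M 1 0 : ℝ) : OnePoint ℝ) := rfl

@[simp] lemma mobAux_coe (M : Matrix (Fin 2) (Fin 2) ℝ) (r : ℝ) :
    mobAux M (r : OnePoint ℝ) = if M 1 0 * r + M 1 1 = 0 then ∞
      else (((M 0 0 * r + M 0 1) / (M 1 0 * r + M 1 1) : ℝ) : OnePoint ℝ) := rfl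

lemma mobAux_neg (M : Matrix (Fin 2) (Fin 2) ℝ) : mobAux (-M) = mobAux M := by
  funext x
  induction x using OnePoint.rec with
  | infty => simp [Matrix.neg_apply, neg_eq_zero, neg_div_neg_eq]
  | coe r =>
      rw [mobAux_coe, mobAux_coe]
      have h1 : (-M) 1 0 * r + (-M) 1 1 = -(M 1 0 * r + M 1 1) := by
        simp [Matrix.neg_apply]; ring
      have h0 : (-M) 0 0 * r + (-M) 0 1 = -(M 0 0 * r + M 0 1) := by
        simp [Matrix.neg_apply]; ring
      rw [h1, h0]
      simp only [neg_eq_zero, neg_div_neg_eq]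

end Farey

namespace Farey

/-- Möbius action of an integral 2×2 special linear matrix on `ℝ ∪ {∞}`. -/
def mobSL (g : SL(2, ℤ)) : OnePoint ℝ → OnePoint ℝ :=
  mobAux ((g : Matrix (Fin 2) (Fin 2) ℤ).map (Int.cast : ℤ → ℝ))

lemma mobSL_mul_center (g z : SL(2, ℤ)) (hz : z ∈ Subgroup.center SL(2, ℤ)) :
    mobSL (g * z) = mobSL g := by
  obtain ⟨r, hr, hscalar⟩ := Matrix.SpecialLinearGroup.mem_center_iff.mp hz
  have hr' : r = 1 ∨ r = -1 := by
    have : IsUnit r := IsUnit.of_mul_eq_one (r ^ 1) (by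
      simpa [pow_succ, Fintype.card_fin] using hr)
    exact Int.isUnit_iff.mp this
  rcases hr' with h1 | h1
  · have : z = 1 := by
      ext i j
      have := congrFun (congrFun hscalar i) j
      simp [h1] at this
      simp [← this]
    simp [this]
  · have hzmat : (z : Matrix (Fin 2) (Fin 2) ℤ) = -1 := by
      ext i j
      have := congrFun (congrFun hscalar i) j
      simp [h1] at this
      simp [← this]
    unfold mobSL
    have : ((g * z : SL(2,ℤ)) : Matrix (Fin 2) (Fin 2) ℤ) = -(g : Matrix (Fin 2) (Fin 2) ℤ) := by
      rw [Matrix.SpecialLinearGroup.coe_mul, hzmat]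
      simp
    rw [this]
    have hmap : ((-(g : Matrix (Fin 2) (Fin 2) ℤ)).map (Int.cast : ℤ → ℝ))
        = -(((g : Matrix (Fin 2) (Fin 2) ℤ)).map (Int.cast : ℤ → ℝ)) := by
      ext i j
      simp
    rw [hmap, mobAux_neg]

/-- Möbius action of an element of `PSL(2,ℤ)` on `ℝ ∪ {∞}`. -/
def mob (x : PSL(2, ℤ)) : OnePoint ℝ → OnePoint ℝ :=
  Quotient.liftOn' x mobSL (by
    intro g h hgh
    have hmem : g⁻¹ * h ∈ Subgroup.center SL(2, ℤ) := QuotientGroup.leftRel_apply.mp hgh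
    have : h = g * (g⁻¹ * h) := by group
    rw [this, mobSL_mul_center g _ hmem])

end Farey

namespace Farey

/-- The matrix `A = [[1,-2],[1,-1]]` as an element of `SL(2,ℤ)`. -/
def A : SL(2, ℤ) := ⟨!![1, -2; 1, -1], by norm_num [Matrix.det_fin_two_of]⟩

/-- The matrix `B = [[0,-1],[1,0]]` as an element of `SL(2,ℤ)`. -/
def B : SL(2, ℤ) := ⟨!![0, -1; 1, 0], by norm_num [Matrix.det_fin_two_of]⟩

/-- The matrix `C = [[1,-1],[2,-1]]` as an element of `SL(2,ℤ)`. -/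
def C : SL(2, ℤ) := ⟨!![1, -1; 2, -1], by norm_num [Matrix.det_fin_two_of]⟩

/-- The element `a ∈ PSL(2,ℤ)`. -/
def a : PSL(2, ℤ) := QuotientGroup.mk A

/-- The element `b ∈ PSL(2,ℤ)`. -/
def b : PSL(2, ℤ) := QuotientGroup.mk B

/-- The element `c ∈ PSL(2,ℤ)`. -/
def c : PSL(2, ℤ) := QuotientGroup.mk C

/-- The Farey group: the subgroup of `PSL(2,ℤ)` generated by `a`, `b`, `c`. -/
def fareyGroup : Subgroup PSL(2, ℤ) := Subgroup.closure {a, b, c}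

/-- The word length of an element of `PSL(2,ℤ)` with respect to the generators
`a`, `b`, `c` of the Farey group. -/
def wordLength (x : PSL(2, ℤ)) : ℕ :=
  sInf {n | ∃ l : List PSL(2, ℤ), l.length = n ∧ (∀ s ∈ l, s = a ∨ s = b ∨ s = c) ∧ l.prod = x}

/-- The sphere of radius `n` in the Farey group for the word metric w.r.t. `{a,b,c}`. -/
def sphere (n : ℕ) : Set PSL(2, ℤ) := {x | x ∈ fareyGroup ∧ wordLength x = n}

end Farey

namespace Farey

/-- The mediant of two rationals, `p₁/q₁ ⊕ p₂/q₂ = (p₁+p₂)/(q₁+q₂)` (in lowest terms). -/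
def mediant (p q : ℚ) : ℚ := ((p.num + q.num : ℤ) : ℚ) / (((p.den : ℤ) + (q.den : ℤ) : ℤ) : ℚ)

/-- Insert the mediant between every two consecutive entries of a list of rationals. -/
def insertMediants : List ℚ → List ℚ
  | p :: q :: rest => p :: mediant p q :: insertMediants (q :: rest)
  | l => l

/-- The Farey sequences: `F_0 = (0,1)`, and `F_{n+1}` is obtained from `F_n` by inserting
mediants between consecutive terms. -/
def fareySeq : ℕ → List ℚ
  | 0 => [0, 1]
  | n + 1 => insertMediants (fareySeq n)

/-- `p, q` are consecutive terms of the Farey sequence `F_n`. -/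
def IsFareyPairIn (n : ℕ) (p q : ℚ) : Prop :=
  ∃ i : ℕ, (fareySeq n)[i]? = some p ∧ (fareySeq n)[i + 1]? = some q

/-- `p, q` form a Farey pair: they are consecutive terms of some Farey sequence. -/
def IsFareyPair (p q : ℚ) : Prop := ∃ n : ℕ, IsFareyPairIn n p q

/-- The `k`-th summand (`k = 0, 1, 2, …`) in the series defining Minkowski's question mark
function: `(−1)^k 2^{−(a₁+⋯+a_{k+1})}` when the continued fraction expansion
`x = [a₀; a₁, a₂, …]` has at least `k+1` partial denominators and `0` otherwise. -/
def qmTerm (x : ℝ) (k : ℕ) : ℝ :=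
  match (List.range (k + 1)).mapM (fun i => (GenContFract.of x).partDens.get? i) with
  | none => 0
  | some l => (-1 : ℝ) ^ k * (2 : ℝ) ^ (-(l.sum))

/-- Minkowski's question mark function on `[0,1]`:
`?(x) = 2 ∑_{k≥1} (−1)^{k+1} 2^{−(a₁+⋯+a_k)}` for `x = [0; a₁, a₂, …]`, `?(1) = 1`. -/
def questionMark (x : ℝ) : ℝ := if x = 1 then 1 else 2 * ∑' k : ℕ, qmTerm x k

/-- The extended Minkowski function `M̄(q) = (1/3)(∑_{k=−∞}^{m−1} 2^{−|k|} + ?(q−m)·2^{−|m|})`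
for `q ∈ [m, m+1]`. -/
def extM (q : ℝ) : ℝ :=
  (1 / 3) * ((∑' j : ℕ, (2 : ℝ) ^ (-|⌊q⌋ - 1 - (j : ℤ)|)) +
    questionMark (q - ⌊q⌋) * (2 : ℝ) ^ (-|⌊q⌋|))

instance : MeasurableSpace (OnePoint ℝ) := borel _
instance : BorelSpace (OnePoint ℝ) := ⟨rfl⟩

/-- `μ` is the extended Minkowski measure: the Borel probability measure on `ℝ ∪ {∞}` giving
no mass to `{∞}` whose cumulative distribution function is the extended Minkowski function. -/
def IsExtMinkowskiMeasure (μ : Measure (OnePoint ℝ)) : Prop :=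
  IsProbabilityMeasure μ ∧ μ {∞} = 0 ∧
    ∀ u v : ℝ, u ≤ v →
      μ ((fun r : ℝ => (r : OnePoint ℝ)) '' Set.Ico u v) = ENNReal.ofReal (extM v - extM u)

end Farey

namespace GenContFract

theorem of_s_eq_of_s_fract (v : ℝ) :
    (GenContFract.of v).s = (GenContFract.of (Int.fract v)).s := by
  refine Stream'.Seq.ext fun n => ?_
  cases n with
  | zero =>
    by_cases h : Int.fract v = 0
    · obtain ⟨m, rfl⟩ : ∃ m : ℤ, v = m := ⟨⌊v⌋, by linarith [Int.floor_add_fract v]⟩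
      rw [Int.fract_intCast, ← Int.cast_zero, of_s_of_int, of_s_of_int]
    · have h' : Int.fract (Int.fract v) ≠ 0 := by rwa [Int.fract_fract]
      exact (of_s_head h).trans ((of_s_head h').trans (by rw [Int.fract_fract])).symm
  | succ n => rw [of_s_succ, of_s_succ, Int.fract_fract]

theorem partDens_get?_zero {x : ℝ} (h0 : 0 < x) (h1 : x < 1) :
    (GenContFract.of x).partDens.get? 0 = some (⌊x⁻¹⌋ : ℝ) := by
  have hx : Int.fract x = x := Int.fract_eq_self.mpr ⟨h0.le, h1⟩
  have hhead := of_s_head (hx.symm ▸ h0.ne' : Int.fract x ≠ 0)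
  rw [hx] at hhead
  simp only [GenContFract.partDens, Stream'.Seq.map_get?]
  rw [show (GenContFract.of x).s.get? 0 = (GenContFract.of x).s.head from rfl, hhead]
  rfl

theorem partDens_get?_succ {x : ℝ} (h0 : 0 ≤ x) (h1 : x < 1) (n : ℕ) :
    (GenContFract.of x).partDens.get? (n + 1)
      = (GenContFract.of (Int.fract x⁻¹)).partDens.get? n := by
  simp only [GenContFract.partDens, Stream'.Seq.map_get?]
  rw [of_s_succ, Int.fract_eq_self.mpr ⟨h0, h1⟩, of_s_eq_of_s_fract]

end GenContFract

theorem List.length_le_sum_of_mapM_eq_some {α R : Type*} [Semiring R] [PartialOrder R]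
    [IsOrderedRing R] {F : α → Option R} (hF : ∀ a r, F a = some r → 1 ≤ r) :
    ∀ {l : List α} {l' : List R}, l.mapM F = some l' → (l.length : R) ≤ l'.sum
  | [], l', h => by simp_all
  | a :: l, l', h => by
    obtain ⟨r, hr, l'', hl'', rfl⟩ :
        ∃ r, F a = some r ∧ ∃ l'', l.mapM F = some l'' ∧ r :: l'' = l' := by
      simpa [List.mapM_cons, Option.bind_eq_some_iff] using h
    rw [List.length_cons, Nat.cast_succ, List.sum_cons, add_comm]
    exact add_le_add (hF a r hr) (List.length_le_sum_of_mapM_eq_some hF hl'')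

namespace Farey

/-- The first `k` partial denominators of `x`, or `none` if its continued fraction is shorter. -/
def partDenPrefix (x : ℝ) (k : ℕ) : Option (List ℝ) :=
  (List.range k).mapM fun i => (GenContFract.of x).partDens.get? i

theorem qmTerm_of_partDenPrefix_eq_some {x : ℝ} {k : ℕ} {l : List ℝ}
    (h : partDenPrefix x (k + 1) = some l) : qmTerm x k = (-1) ^ k * 2 ^ (-l.sum) := by
  unfold qmTerm; rw [← partDenPrefix, h]

theorem qmTerm_of_partDenPrefix_eq_none {x : ℝ} {k : ℕ}
    (h : partDenPrefix x (k + 1) = none) : qmTerm x k = 0 := by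
  unfold qmTerm; rw [← partDenPrefix, h]

theorem partDenPrefix_succ {x : ℝ} (h0 : 0 < x) (h1 : x < 1) (k : ℕ) :
    partDenPrefix x (k + 1) = (partDenPrefix (Int.fract x⁻¹) k).map ((⌊x⁻¹⌋ : ℝ) :: ·) := by
  simp only [partDenPrefix, List.range_succ_eq_map, List.mapM_cons, List.mapM_map,
    GenContFract.partDens_get?_zero h0 h1, Function.comp_def, Nat.succ_eq_add_one,
    GenContFract.partDens_get?_succ h0.le h1]
  cases (List.range k).mapM fun i => (GenContFract.of (Int.fract x⁻¹)).partDens.get? i <;> rfl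

theorem partDenPrefix_zero_succ (k : ℕ) : partDenPrefix 0 (k + 1) = none := by
  have : (GenContFract.of (0 : ℝ)).partDens.get? 0 = none := by
    rw [← Int.cast_zero, GenContFract.partDens, Stream'.Seq.map_get?, GenContFract.of_s_of_int]; rfl
  simp [partDenPrefix, List.range_succ_eq_map, this]

theorem abs_qmTerm_le (x : ℝ) (k : ℕ) : |qmTerm x k| ≤ (1 / 2) ^ (k + 1) := by
  rcases h : partDenPrefix x (k + 1) with _ | l
  · simp [qmTerm_of_partDenPrefix_eq_none h]
  rw [qmTerm_of_partDenPrefix_eq_some h]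
  have hsum : ((k + 1 : ℕ) : ℝ) ≤ l.sum := by
    simpa using List.length_le_sum_of_mapM_eq_some
      (fun _ _ hr => GenContFract.of_one_le_get?_partDen hr) h
  calc |(-1) ^ k * (2 : ℝ) ^ (-l.sum)| = (2 : ℝ) ^ (-l.sum) := by
        simp [abs_of_pos (Real.rpow_pos_of_pos two_pos _)]
    _ ≤ (2 : ℝ) ^ (-((k + 1 : ℕ) : ℝ)) := Real.rpow_le_rpow_of_exponent_le one_le_two (by linarith)
    _ = (1 / 2) ^ (k + 1) := by rw [Real.rpow_neg zero_le_two, Real.rpow_natCast]; simp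

theorem summable_qmTerm (x : ℝ) : Summable (qmTerm x) :=
  .of_norm_bounded ((summable_geometric_two).mul_right (1 / 2)) fun k => by
    simpa [pow_succ] using abs_qmTerm_le x k

theorem qmTerm_zero_left (k : ℕ) : qmTerm 0 k = 0 :=
  qmTerm_of_partDenPrefix_eq_none (partDenPrefix_zero_succ k)

theorem questionMark_zero : questionMark 0 = 0 := by
  simp [questionMark, qmTerm_zero_left]

theorem questionMark_one : questionMark 1 = 1 := if_pos rfl

theorem qmTerm_zero_of_mem_Ioo {x : ℝ} (h0 : 0 < x) (h1 : x < 1) :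
    qmTerm x 0 = 2 ^ (-⌊x⁻¹⌋) := by
  rw [qmTerm_of_partDenPrefix_eq_some (by rw [partDenPrefix_succ h0 h1]; rfl)]
  simp [← Real.rpow_intCast, Real.rpow_neg zero_le_two]

theorem qmTerm_succ_of_mem_Ioo {x : ℝ} (h0 : 0 < x) (h1 : x < 1) (k : ℕ) :
    qmTerm x (k + 1) = -2 ^ (-⌊x⁻¹⌋) * qmTerm (Int.fract x⁻¹) k := by
  have hshift := partDenPrefix_succ h0 h1 (k + 1)
  rcases h : partDenPrefix (Int.fract x⁻¹) (k + 1) with _ | l <;> rw [h] at hshift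
  · rw [qmTerm_of_partDenPrefix_eq_none hshift, qmTerm_of_partDenPrefix_eq_none h, mul_zero]
  · rw [qmTerm_of_partDenPrefix_eq_some hshift, qmTerm_of_partDenPrefix_eq_some h,
      List.sum_cons, neg_add, Real.rpow_add two_pos, Real.rpow_neg zero_le_two, Real.rpow_intCast,
      _root_.zpow_neg]
    ring

/-- The continued-fraction recursion `?(x) = 2^{-a₁} (2 - ?([0; a₂, a₃, …]))`. -/
theorem questionMark_rec {x : ℝ} (h0 : 0 < x) (h1 : x ≤ 1) :
    questionMark x = 2 ^ (-⌊x⁻¹⌋) * (2 - questionMark (Int.fract x⁻¹)) := by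
  rcases h1.lt_or_eq with h1 | rfl
  · have htsum : ∑' k, qmTerm x k = 2 ^ (-⌊x⁻¹⌋) * (1 - ∑' k, qmTerm (Int.fract x⁻¹) k) := by
      rw [(summable_qmTerm x).tsum_eq_zero_add, qmTerm_zero_of_mem_Ioo h0 h1,
        tsum_congr (qmTerm_succ_of_mem_Ioo h0 h1), tsum_mul_left]
      ring
    rw [questionMark, if_neg h1.ne, htsum, questionMark, if_neg (Int.fract_lt_one _).ne]
    ring
  · norm_num [questionMark_zero, questionMark_one]

theorem questionMark_div_one_add {x : ℝ} (h0 : 0 ≤ x) (h1 : x ≤ 1) :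
    questionMark (x / (1 + x)) = questionMark x / 2 := by
  rcases h0.lt_or_eq with h0 | rfl
  · have hinv : (x / (1 + x))⁻¹ = x⁻¹ + 1 := by field_simp
    rw [questionMark_rec (by positivity) ((div_le_one (by positivity)).mpr (by linarith)),
      questionMark_rec h0 h1, hinv, Int.floor_add_one, Int.fract_add_one, neg_add,
      zpow_add₀ two_ne_zero]
    ring
  · simp [questionMark_zero]

theorem questionMark_half : questionMark (1 / 2) = 1 / 2 := by
  simpa [questionMark_one, one_add_one_eq_two] using questionMark_div_one_add zero_le_one le_rfl

theorem questionMark_inv_one_add {x : ℝ} (h0 : 0 ≤ x) (h1 : x ≤ 1) :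
    questionMark (1 + x)⁻¹ = 1 - questionMark x / 2 := by
  rcases h1.lt_or_eq with h1 | rfl
  · have hfloor : ⌊1 + x⌋ = 1 :=
      Int.floor_eq_iff.mpr ⟨by push_cast; linarith, by push_cast; linarith⟩
    have hfract : Int.fract (1 + x) = x := by rw [Int.fract, hfloor]; push_cast; ring
    rw [questionMark_rec (by positivity) (inv_le_one_of_one_le₀ (by linarith)), inv_inv, hfloor,
      hfract, _root_.zpow_neg_one]
    ring
  · norm_num [questionMark_half, questionMark_one]

theorem questionMark_one_sub {x : ℝ} (h0 : 0 ≤ x) (h1 : x ≤ 1) :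
    questionMark (1 - x) = 1 - questionMark x := by
  suffices key : ∀ x : ℝ, 0 ≤ x → x ≤ 1 / 2 → questionMark (1 - x) = 1 - questionMark x by
    rcases le_total x (1 / 2) with hx | hx
    · exact key x h0 hx
    · have := key (1 - x) (by linarith) (by linarith)
      rw [sub_sub_cancel] at this
      linarith
  intro x h0 hx
  have h1x : 0 < 1 - x := by linarith
  set z := x / (1 - x) with hz
  have hz0 : 0 ≤ z := by positivity
  have hz1 : z ≤ 1 := (div_le_one h1x).mpr (by linarith)
  have hx_eq : x = z / (1 + z) := by rw [hz]; field_simp; ring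
  have h1x_eq : 1 - x = (1 + z)⁻¹ := by rw [hz]; field_simp; ring
  rw [h1x_eq, questionMark_inv_one_add hz0 hz1, hx_eq, questionMark_div_one_add hz0 hz1]

theorem questionMark_inv_two_sub {x : ℝ} (h0 : 0 ≤ x) (h1 : x ≤ 1) :
    questionMark (2 - x)⁻¹ = (1 + questionMark x) / 2 := by
  have := questionMark_inv_one_add (x := 1 - x) (by linarith) (by linarith)
  rw [questionMark_one_sub h0 h1, show 1 + (1 - x) = 2 - x by ring] at this
  linarith

theorem mediant_div_div {a b c d : ℤ} (hb : 0 < b) (hd : 0 < d) (hab : IsCoprime a b)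
    (hcd : IsCoprime c d) : mediant (a / b) (c / d) = (a + c) / (b + d) := by
  rw [Int.isCoprime_iff_gcd_eq_one] at hab hcd
  rw [mediant, Rat.num_div_eq_of_coprime hb hab, Rat.num_div_eq_of_coprime hd hcd,
    Rat.den_div_eq_of_coprime hb hab, Rat.den_div_eq_of_coprime hd hcd]
  push_cast
  rfl

theorem one_le_intCast_mul_add {γ δ : ℤ} (hδ : 1 ≤ δ) (hγδ : 1 ≤ γ + δ) {x : ℝ} (h0 : 0 ≤ x)
    (h1 : x ≤ 1) : 1 ≤ γ * x + δ := by
  have hδ' : (1 : ℝ) ≤ δ := by exact_mod_cast hδ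
  have hγδ' : (1 : ℝ) ≤ γ + δ := by exact_mod_cast hγδ
  nlinarith

theorem mediant_of_det_eq_one {α β γ δ : ℤ} (hdet : α * δ - β * γ = 1) (hδ : 1 ≤ δ)
    (hγδ : 1 ≤ γ + δ) :
    mediant (β / δ) ((α + β) / (γ + δ)) = (α + 2 * β : ℤ) / (γ + 2 * δ : ℤ) := by
  have h := mediant_div_div (a := β) (b := δ) (c := α + β) (d := γ + δ) (by omega) (by omega)
    ⟨-γ, α, by linear_combination hdet⟩ ⟨-γ, α, by linear_combination hdet⟩
  push_cast at h ⊢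
  rw [h]
  ring

def IsFareyChart (n : ℕ) (p q : ℚ) : Prop :=
  ∃ α β γ δ : ℤ, α * δ - β * γ = 1 ∧ 1 ≤ δ ∧ 1 ≤ γ + δ ∧
    p = β / δ ∧ q = (α + β) / (γ + δ) ∧
    ∀ x : ℝ, 0 ≤ x → x ≤ 1 →
      questionMark ((α * x + β) / (γ * x + δ)) = questionMark p + questionMark x / 2 ^ n

namespace IsFareyChart

theorem zero_one : IsFareyChart 0 0 1 :=
  ⟨1, 0, 0, 1, by norm_num, le_rfl, le_rfl, by norm_num, by norm_num,
    fun x _ _ => by simp [questionMark_zero]⟩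

theorem mediant_left {n : ℕ} {p q : ℚ} (h : IsFareyChart n p q) :
    IsFareyChart (n + 1) p (mediant p q) := by
  obtain ⟨α, β, γ, δ, hdet, hδ, hγδ, rfl, rfl, hmap⟩ := h
  refine ⟨α + β, β, γ + δ, δ, by linear_combination hdet, hδ, by omega, rfl,
    by rw [mediant_of_det_eq_one hdet hδ hγδ]; push_cast; ring, fun x h0 h1 => ?_⟩
  have hy0 : 0 ≤ x / (1 + x) := by positivity
  have hy1 : x / (1 + x) ≤ 1 := (div_le_one (by positivity)).mpr (by linarith)
  have hcomp : ((α + β : ℤ) * x + β) / ((γ + δ : ℤ) * x + δ)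
      = (α * (x / (1 + x)) + β) / (γ * (x / (1 + x)) + δ) := by
    have hden := one_le_intCast_mul_add hδ hγδ hy0 hy1
    have hden' := one_le_intCast_mul_add (γ := γ + δ) hδ (by omega) h0 h1
    rw [div_eq_div_iff (by linarith) (by linarith)]
    field_simp
    push_cast
    ring
  rw [hcomp, hmap _ hy0 hy1, questionMark_div_one_add h0 h1, pow_succ]
  ring

theorem mediant_right {n : ℕ} {p q : ℚ} (h : IsFareyChart n p q) :
    IsFareyChart (n + 1) (mediant p q) q := by
  obtain ⟨α, β, γ, δ, hdet, hδ, hγδ, rfl, rfl, hmap⟩ := h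
  have hmed := mediant_of_det_eq_one hdet hδ hγδ
  have hval : ∀ x : ℝ, 0 ≤ x → x ≤ 1 →
      questionMark (((-β : ℤ) * x + (α + 2 * β : ℤ)) / ((-δ : ℤ) * x + (γ + 2 * δ : ℤ)))
        = questionMark (β / δ : ℚ) + (1 + questionMark x) / 2 ^ (n + 1) := by
    intro x h0 h1
    have hy0 : 0 ≤ (2 - x)⁻¹ := inv_nonneg.mpr (by linarith)
    have hy1 : (2 - x)⁻¹ ≤ 1 := inv_le_one_of_one_le₀ (by linarith)
    have hcomp : ((-β : ℤ) * x + (α + 2 * β : ℤ)) / ((-δ : ℤ) * x + (γ + 2 * δ : ℤ))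
        = (α * (2 - x)⁻¹ + β) / (γ * (2 - x)⁻¹ + δ) := by
      have hden := one_le_intCast_mul_add hδ hγδ hy0 hy1
      have hden' := one_le_intCast_mul_add (γ := -δ) (δ := γ + 2 * δ) (by omega) (by omega) h0 h1
      have : 2 - x ≠ 0 := by linarith
      rw [div_eq_div_iff (by linarith) (by linarith)]
      field_simp
      push_cast
      ring
    rw [hcomp, hmap _ hy0 hy1, questionMark_inv_two_sub h0 h1, pow_succ]
    ring
  have hmed_val : questionMark (mediant (β / δ) ((α + β) / (γ + δ)) : ℚ)
      = questionMark (β / δ : ℚ) + 1 / 2 ^ (n + 1) := by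
    simpa [hmed, questionMark_zero] using hval 0 le_rfl zero_le_one
  refine ⟨-β, α + 2 * β, -δ, γ + 2 * δ, by linear_combination hdet, by omega, by omega, hmed,
    by push_cast; ring, fun x h0 h1 => ?_⟩
  rw [hval x h0 h1, hmed_val]
  ring

theorem questionMark_sub {n : ℕ} {p q : ℚ} (h : IsFareyChart n p q) :
    questionMark q - questionMark p = 1 / 2 ^ n := by
  obtain ⟨α, β, γ, δ, -, -, -, rfl, rfl, hmap⟩ := h
  have := hmap 1 zero_le_one le_rfl
  rw [mul_one, mul_one, questionMark_one] at this
  push_cast at this ⊢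
  rw [this]
  ring

end IsFareyChart

theorem exists_insertMediants_cons (q : ℚ) (l : List ℚ) :
    ∃ t, insertMediants (q :: l) = q :: t := by
  cases l <;> exact ⟨_, rfl⟩

theorem isChain_insertMediants {R S : ℚ → ℚ → Prop}
    (h : ∀ p q, R p q → S p (mediant p q) ∧ S (mediant p q) q) :
    ∀ {l : List ℚ}, l.IsChain R → (insertMediants l).IsChain S
  | [], _ => .nil
  | [_], _ => .singleton _
  | p :: q :: l, hc => by
    obtain ⟨hpq, hc⟩ := List.isChain_cons_cons.mp hc
    have ih := isChain_insertMediants h hc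
    obtain ⟨t, ht⟩ := exists_insertMediants_cons q l
    rw [ht] at ih
    rw [insertMediants, ht]
    exact .cons_cons (h p q hpq).1 (.cons_cons (h p q hpq).2 ih)

theorem isChain_fareySeq (n : ℕ) : (fareySeq n).IsChain (IsFareyChart n) := by
  induction n with
  | zero => exact .cons_cons IsFareyChart.zero_one (.singleton _)
  | succ n ih =>
    exact isChain_insertMediants (fun _ _ h => ⟨h.mediant_left, h.mediant_right⟩) ih

theorem IsFareyPairIn.isFareyChart {n : ℕ} {p q : ℚ} (h : IsFareyPairIn n p q) :
    IsFareyChart n p q := by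
  obtain ⟨i, hp, hq⟩ := h
  obtain ⟨hi, rfl⟩ := List.getElem?_eq_some_iff.mp hq
  obtain ⟨-, rfl⟩ := List.getElem?_eq_some_iff.mp hp
  exact (isChain_fareySeq n).getElem i hi

end Farey

open Farey

/-- **Lemma (Farey pairs and the question mark function).** If `p < q` are consecutive terms
of the Farey sequence `F_n`, then `?(q) − ?(p) = 2^{−n}`, where `?` is Minkowski's question
mark function. -/
theorem questionMark_fareyPair (n : ℕ) (p q : ℚ) (hpq : IsFareyPairIn n p q) :
    questionMark (q : ℝ) - questionMark (p : ℝ) = (1 : ℝ) / 2 ^ n :=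
  hpq.isFareyChart.questionMark_sub
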